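/- arXiv:2003.09343 — 4 statements merged into one kernel-verified Lean document; each statement's English description precedes it below -/
import Mathlib

section
/- Let θ₁, θ₂ ∈ (0, π) with θ₁ + θ₂ < π. If h, k are nonzero complex numbers with |arg(h)| ≤ θ₁ and |arg(k)| ≤ θ₂, then |k| ≤ (1/sin(θ₁+θ₂)) · |h + k|. -/
/-!
Since `|arg h - arg k| ≤ θ₁ + θ₂ < π`, the law of cosines gives
`‖h + k‖² ≥ ‖h‖² + ‖k‖² + 2‖h‖‖k‖ cos (θ₁ + θ₂) = (‖h‖ + ‖k‖ cos (θ₁ + θ₂))² + (‖k‖ sin (θ₁ + θ₂))²`.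
-/

open Real

theorem Complex.sq_norm_add_eq_add_mul_cos_arg_sub (h k : ℂ) :
    ‖h + k‖ ^ 2 = ‖h‖ ^ 2 + ‖k‖ ^ 2 + 2 * ‖h‖ * ‖k‖ * Real.cos (h.arg - k.arg) := by
  have hre : h.re * k.re + h.im * k.im = ‖h‖ * ‖k‖ * Real.cos (h.arg - k.arg) := by
    rw [Real.cos_sub, ← Complex.norm_mul_cos_arg h, ← Complex.norm_mul_sin_arg h,
      ← Complex.norm_mul_cos_arg k, ← Complex.norm_mul_sin_arg k]
    ring
  rw [Complex.sq_norm, Complex.sq_norm, Complex.sq_norm, Complex.normSq_apply,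
    Complex.normSq_apply, Complex.normSq_apply, Complex.add_re, Complex.add_im]
  linear_combination 2 * hre

theorem sq_sin_mul_le_add_mul_cos (r t s : ℝ) :
    (sin s * t) ^ 2 ≤ r ^ 2 + t ^ 2 + 2 * r * t * cos s := by
  nlinarith [sq_nonneg (r + cos s * t), sin_sq_add_cos_sq s]

theorem Complex.sin_mul_norm_le_norm_add {h k : ℂ} {s : ℝ} (hs : s ≤ π)
    (hangle : |h.arg - k.arg| ≤ s) : Real.sin s * ‖k‖ ≤ ‖h + k‖ := by
  have hcos : Real.cos s ≤ Real.cos (h.arg - k.arg) := by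
    rw [← Real.cos_abs (h.arg - k.arg)]
    exact cos_le_cos_of_nonneg_of_le_pi (abs_nonneg _) hs hangle
  have hsq : (Real.sin s * ‖k‖) ^ 2 ≤ ‖h + k‖ ^ 2 := by
    rw [Complex.sq_norm_add_eq_add_mul_cos_arg_sub]
    have hrt : 0 ≤ 2 * ‖h‖ * ‖k‖ := by positivity
    linarith [sq_sin_mul_le_add_mul_cos ‖h‖ ‖k‖ s, mul_le_mul_of_nonneg_left hcos hrt]
  exact (le_abs_self _).trans (abs_le_of_sq_le_sq hsq (norm_nonneg _))

theorem stmt2_general (θ₁ θ₂ : ℝ) (h1 : θ₁ ∈ Set.Ioo 0 Real.pi)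
    (hsum : θ₁ + θ₂ < Real.pi) (h k : ℂ)
    (hargh : |h.arg| ≤ θ₁) (hargk : |k.arg| ≤ θ₂) :
    ‖k‖ ≤ (1 / Real.sin (θ₁ + θ₂)) * ‖h + k‖ := by
  have hangle : |h.arg - k.arg| ≤ θ₁ + θ₂ :=
    (abs_sub _ _).trans (add_le_add hargh hargk)
  have hpos : 0 < θ₁ + θ₂ := by linarith [h1.1, abs_nonneg k.arg]
  have hsin : 0 < sin (θ₁ + θ₂) := sin_pos_of_pos_of_lt_pi hpos hsum
  rw [one_div_mul_eq_div, le_div_iff₀ hsin, mul_comm]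
  exact Complex.sin_mul_norm_le_norm_add hsum.le hangle

theorem stmt2 (θ₁ θ₂ : ℝ) (h1 : θ₁ ∈ Set.Ioo 0 Real.pi) (h2 : θ₂ ∈ Set.Ioo 0 Real.pi)
    (hsum : θ₁ + θ₂ < Real.pi) (h k : ℂ) (hh : h ≠ 0) (hk : k ≠ 0)
    (hargh : |h.arg| ≤ θ₁) (hargk : |k.arg| ≤ θ₂) :
    ‖k‖ ≤ (1 / Real.sin (θ₁ + θ₂)) * ‖h + k‖ :=
  stmt2_general θ₁ θ₂ h1 hsum h k hargh hargk
end

section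
/- Let θ₁, θ₂ ∈ (0, π) with θ₁ + θ₂ < π. If h, k are complex numbers with |arg(h)| ≤ θ₁ whenever h ≠ 0 and |arg(k)| ≤ θ₂ whenever k ≠ 0, then max(|h|, |k|) ≤ (1/sin(θ₁+θ₂)) · |h + k|. -/
/-!
With θ = θ₁ + θ₂ < π we have |arg h - arg k| ≤ θ, so the real inner product ⟪h, k⟫ is at least
|h| |k| cos θ. Completing the square, |h + k|² ≥ (|k| + |h| cos θ)² + (|h| sin θ)² ≥ (|h| sin θ)²,
and symmetrically for |k|.
-/

open Real

theorem sin_mul_norm_le_norm_add {E : Type*} [NormedAddCommGroup E] [InnerProductSpace ℝ E]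
    {x y : E} {θ : ℝ} (hinner : ‖x‖ * ‖y‖ * cos θ ≤ inner ℝ x y) :
    sin θ * ‖x‖ ≤ ‖x + y‖ := by
  refine le_of_sq_le_sq ?_ (norm_nonneg _)
  calc (sin θ * ‖x‖) ^ 2 ≤ (sin θ * ‖x‖) ^ 2 + (‖y‖ + cos θ * ‖x‖) ^ 2 :=
        le_add_of_nonneg_right (sq_nonneg _)
    _ = ‖x‖ ^ 2 + 2 * (‖x‖ * ‖y‖ * cos θ) + ‖y‖ ^ 2 := by
        linear_combination ‖x‖ ^ 2 * sin_sq_add_cos_sq θ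
    _ ≤ ‖x + y‖ ^ 2 := by rw [norm_add_sq_real]; linarith

namespace Complex

theorem inner_eq_norm_mul_norm_mul_cos_arg_sub (h k : ℂ) :
    inner ℝ h k = ‖h‖ * ‖k‖ * Real.cos (arg h - arg k) := by
  rw [Real.cos_sub, Complex.inner, mul_re, conj_re, conj_im, ← norm_mul_cos_arg h,
    ← norm_mul_cos_arg k, ← norm_mul_sin_arg h, ← norm_mul_sin_arg k]
  ring

theorem norm_mul_norm_mul_cos_le_inner {h k : ℂ} {θ : ℝ} (hθ : θ ≤ π)
    (harg : h ≠ 0 → k ≠ 0 → |arg h - arg k| ≤ θ) :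
    ‖h‖ * ‖k‖ * Real.cos θ ≤ inner ℝ h k := by
  rw [inner_eq_norm_mul_norm_mul_cos_arg_sub]
  rcases eq_or_ne h 0 with rfl | hh
  · simp
  rcases eq_or_ne k 0 with rfl | hk
  · simp
  gcongr
  rw [← Real.cos_abs (arg h - arg k)]
  exact Real.cos_le_cos_of_nonneg_of_le_pi (abs_nonneg _) hθ (harg hh hk)

end Complex

theorem stmt3 (θ₁ θ₂ : ℝ) (h1 : θ₁ ∈ Set.Ioo 0 Real.pi) (h2 : θ₂ ∈ Set.Ioo 0 Real.pi)
    (hsum : θ₁ + θ₂ < Real.pi) (h k : ℂ)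
    (hargh : h ≠ 0 → |h.arg| ≤ θ₁) (hargk : k ≠ 0 → |k.arg| ≤ θ₂) :
    max ‖h‖ ‖k‖ ≤ (1 / Real.sin (θ₁ + θ₂)) * ‖h + k‖ := by
  have hsin : 0 < sin (θ₁ + θ₂) := sin_pos_of_pos_of_lt_pi (by linarith [h1.1, h2.1]) hsum
  have harg : h ≠ 0 → k ≠ 0 → |h.arg - k.arg| ≤ θ₁ + θ₂ := fun hh hk =>
    (abs_sub _ _).trans (add_le_add (hargh hh) (hargk hk))
  have hinner := Complex.norm_mul_norm_mul_cos_le_inner hsum.le harg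
  rw [one_div_mul_eq_div, max_le_iff, le_div_iff₀' hsin, le_div_iff₀' hsin]
  refine ⟨sin_mul_norm_le_norm_add hinner, ?_⟩
  rw [add_comm h k]
  exact sin_mul_norm_le_norm_add (by rwa [mul_comm ‖k‖, real_inner_comm])
end

section
/- For all r₁, r₂ > 0, one has 1/(r₁ + r₂) = ∫_0^∞ e^{-r₁ r} e^{-r₂ r} dr, and consequently ∫_0^∞ ∫_0^∞ (r₁^{4/3} r₂^{4/3} e^{-(r₁ + λ r₂)})/(r₁+r₂) dr₁ dr₂ = Γ(7/3)² ∫_0^∞ (1+r)^{-7/3}(λ+r)^{-7/3} dr for every λ > 0. -/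
/-!
Writing `1 / (x + y) = ∫₀^∞ e^{-(x+y) r} dr` turns the double integral into a triple integral of
a nonnegative function that factors as `g(x, r) h(y, r)`. By Tonelli we may integrate over `x`
and `y` first, and each of these is a Gamma integral:
`∫₀^∞ x^{a-1} e^{-(p+r) x} dx = Γ(a) (p+r)^{-a}`.
Everything is done with lower Lebesgue integrals, which need no integrability; the Bochner
integrals of the statement are recovered at the end because the result is finite.
-/

open MeasureTheory Set Real
open scoped ENNReal

theorem lintegral_rpow_mul_exp_neg_mul_Ioi {a b : ℝ} (ha : 0 < a) (hb : 0 < b) :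
    ∫⁻ t in Ioi 0, ENNReal.ofReal (t ^ (a - 1) * exp (-(b * t)))
      = ENNReal.ofReal (Gamma a * b ^ (-a)) := by
  have hint : IntegrableOn (fun t : ℝ => t ^ (a - 1) * exp (-(b * t))) (Ioi 0) := by
    simpa [rpow_one, neg_mul] using
      integrableOn_rpow_mul_exp_neg_mul_rpow (p := 1) (by linarith) one_pos hb
  rw [← ofReal_integral_eq_lintegral_ofReal hint, integral_rpow_mul_exp_neg_mul_Ioi ha hb,
    one_div, inv_rpow hb.le, rpow_neg hb.le, mul_comm]
  filter_upwards [ae_restrict_mem measurableSet_Ioi] with t (ht : 0 < t)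
  positivity

theorem ofReal_one_div_eq_lintegral_exp {s : ℝ} (hs : 0 < s) :
    ENNReal.ofReal (1 / s) = ∫⁻ r in Ioi 0, ENNReal.ofReal (exp (-(s * r))) := by
  simpa [Gamma_one, rpow_neg_one] using (lintegral_rpow_mul_exp_neg_mul_Ioi one_pos hs).symm

theorem one_div_add_eq_integral_exp_mul_exp {x y : ℝ} (hxy : 0 < x + y) :
    1 / (x + y) = ∫ r in Ioi 0, exp (-x * r) * exp (-y * r) := by
  have h := integral_rpow_mul_exp_neg_mul_Ioi one_pos hxy
  simp only [sub_self, rpow_zero, one_mul, rpow_one, Gamma_one, mul_one] at h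
  rw [← h]
  refine setIntegral_congr_fun measurableSet_Ioi fun r _ => ?_
  rw [← exp_add]
  ring_nf

theorem integral_integral_eq_toReal_lintegral_lintegral {α β : Type*} [MeasurableSpace α]
    [MeasurableSpace β] {μ : Measure α} {ν : Measure β} [SFinite ν] {f : α → β → ℝ}
    (hf : Measurable (Function.uncurry f)) (hf₀ : ∀ᵐ x ∂μ, ∀ᵐ y ∂ν, 0 ≤ f x y)
    (hfin : ∫⁻ x, ∫⁻ y, ENNReal.ofReal (f x y) ∂ν ∂μ ≠ ⊤) :
    ∫ x, ∫ y, f x y ∂ν ∂μ = (∫⁻ x, ∫⁻ y, ENNReal.ofReal (f x y) ∂ν ∂μ).toReal := by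
  have hinner : Measurable fun x => ∫⁻ y, ENNReal.ofReal (f x y) ∂ν :=
    hf.ennreal_ofReal.lintegral_prod_right'
  rw [← integral_toReal hinner.aemeasurable (ae_lt_top hinner hfin)]
  refine integral_congr_ae (hf₀.mono fun x hx => ?_)
  exact integral_eq_lintegral_of_nonneg_ae hx (hf.comp measurable_prodMk_left).aestronglyMeasurable

theorem lintegral_lintegral_lintegral_mul_eq_lintegral_mul {α β γ : Type*}
    [MeasurableSpace α] [MeasurableSpace β] [MeasurableSpace γ] {μ : Measure α} {ν : Measure β}
    {ρ : Measure γ} [SFinite μ] [SFinite ν] [SFinite ρ] {g : α → γ → ℝ≥0∞} {h : β → γ → ℝ≥0∞}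
    (hg : Measurable (Function.uncurry g)) (hh : Measurable (Function.uncurry h)) :
    ∫⁻ x, ∫⁻ y, ∫⁻ r, g x r * h y r ∂ρ ∂ν ∂μ = ∫⁻ r, (∫⁻ x, g x r ∂μ) * ∫⁻ y, h y r ∂ν ∂ρ := by
  have hH : Measurable fun r => ∫⁻ y, h y r ∂ν := hh.lintegral_prod_left
  calc ∫⁻ x, ∫⁻ y, ∫⁻ r, g x r * h y r ∂ρ ∂ν ∂μ
      = ∫⁻ x, ∫⁻ r, g x r * ∫⁻ y, h y r ∂ν ∂ρ ∂μ := by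
        refine lintegral_congr fun x => ?_
        rw [lintegral_lintegral_swap (hg.comp measurable_prodMk_left |>.comp measurable_snd
          |>.mul hh).aemeasurable]
        exact lintegral_congr fun r => lintegral_const_mul _ (hh.comp measurable_prodMk_right)
    _ = ∫⁻ r, (∫⁻ x, g x r ∂μ) * ∫⁻ y, h y r ∂ν ∂ρ := by
        rw [lintegral_lintegral_swap (hg.mul (hH.comp measurable_snd)).aemeasurable]
        exact lintegral_congr fun r => lintegral_mul_const _ (hg.comp measurable_prodMk_right)

theorem ofReal_rpow_mul_exp_div_add_eq_lintegral {a b p q x y : ℝ} (hx : 0 < x) (hy : 0 < y) :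
    ENNReal.ofReal (x ^ (a - 1) * y ^ (b - 1) * exp (-(p * x + q * y)) / (x + y))
      = ∫⁻ r in Ioi 0, ENNReal.ofReal (x ^ (a - 1) * exp (-((p + r) * x)))
          * ENNReal.ofReal (y ^ (b - 1) * exp (-((q + r) * y))) := by
  rw [div_eq_mul_one_div, ENNReal.ofReal_mul (by positivity),
    ofReal_one_div_eq_lintegral_exp (add_pos hx hy),
    ← lintegral_const_mul' _ _ ENNReal.ofReal_ne_top]
  refine lintegral_congr fun r => ?_
  rw [← ENNReal.ofReal_mul (by positivity), ← ENNReal.ofReal_mul (by positivity)]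
  congr 1
  have hexp : exp (-(p * x + q * y)) * exp (-((x + y) * r))
      = exp (-((p + r) * x)) * exp (-((q + r) * y)) := by
    rw [← exp_add, ← exp_add]; ring_nf
  linear_combination x ^ (a - 1) * y ^ (b - 1) * hexp

theorem lintegral_lintegral_rpow_mul_exp_div_add {a b p q : ℝ} (ha : 0 < a) (hb : 0 < b)
    (hp : 0 < p) (hq : 0 < q) :
    ∫⁻ x in Ioi 0, ∫⁻ y in Ioi 0,
        ENNReal.ofReal (x ^ (a - 1) * y ^ (b - 1) * exp (-(p * x + q * y)) / (x + y))
      = ENNReal.ofReal (Gamma a * Gamma b)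
          * ∫⁻ r in Ioi 0, ENNReal.ofReal ((p + r) ^ (-a) * (q + r) ^ (-b)) := by
  calc ∫⁻ x in Ioi 0, ∫⁻ y in Ioi 0,
        ENNReal.ofReal (x ^ (a - 1) * y ^ (b - 1) * exp (-(p * x + q * y)) / (x + y))
      = ∫⁻ x in Ioi 0, ∫⁻ y in Ioi 0, ∫⁻ r in Ioi 0,
          ENNReal.ofReal (x ^ (a - 1) * exp (-((p + r) * x)))
            * ENNReal.ofReal (y ^ (b - 1) * exp (-((q + r) * y))) :=
        setLIntegral_congr_fun measurableSet_Ioi fun x (hx : 0 < x) =>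
          setLIntegral_congr_fun measurableSet_Ioi fun y (hy : 0 < y) =>
            ofReal_rpow_mul_exp_div_add_eq_lintegral hx hy
    _ = ∫⁻ r in Ioi 0, (∫⁻ x in Ioi 0, ENNReal.ofReal (x ^ (a - 1) * exp (-((p + r) * x))))
          * ∫⁻ y in Ioi 0, ENNReal.ofReal (y ^ (b - 1) * exp (-((q + r) * y))) :=
        lintegral_lintegral_lintegral_mul_eq_lintegral_mul (by fun_prop) (by fun_prop)
    _ = ∫⁻ r in Ioi 0, ENNReal.ofReal (Gamma a * (p + r) ^ (-a))
          * ENNReal.ofReal (Gamma b * (q + r) ^ (-b)) := by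
      refine setLIntegral_congr_fun measurableSet_Ioi fun r (hr : 0 < r) => ?_
      rw [lintegral_rpow_mul_exp_neg_mul_Ioi ha (by positivity),
        lintegral_rpow_mul_exp_neg_mul_Ioi hb (by positivity)]
    _ = _ := by
      rw [← lintegral_const_mul' _ _ ENNReal.ofReal_ne_top]
      refine setLIntegral_congr_fun measurableSet_Ioi fun r (hr : 0 < r) => ?_
      rw [← ENNReal.ofReal_mul (by positivity), ← ENNReal.ofReal_mul (by positivity)]
      congr 1; ring

theorem integrableOn_add_rpow_mul_add_rpow_Ioi {a b p q : ℝ} (ha : 1 < a) (hb : 0 ≤ b)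
    (hp : 0 < p) (hq : 0 < q) :
    IntegrableOn (fun r => (p + r) ^ (-a) * (q + r) ^ (-b)) (Ioi 0) := by
  have hdom : IntegrableOn (fun r => (r + p) ^ (-a) * q ^ (-b)) (Ioi 0) :=
    (integrableOn_add_rpow_Ioi_of_lt (by linarith) (by linarith)).mul_const _
  refine hdom.mono' (by fun_prop) ?_
  filter_upwards [ae_restrict_mem measurableSet_Ioi] with r (hr : 0 < r)
  rw [Real.norm_of_nonneg (by positivity), add_comm r p]
  exact mul_le_mul_of_nonneg_left (rpow_le_rpow_of_nonpos hq (by linarith) (by linarith))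
    (by positivity)

theorem stmt9 :
    (∀ r₁ r₂ : ℝ, 0 < r₁ → 0 < r₂ →
      1/(r₁+r₂) = ∫ r in Set.Ioi (0:ℝ), Real.exp (-r₁*r) * Real.exp (-r₂*r)) ∧
    (∀ l : ℝ, 0 < l →
      (∫ r₁ in Set.Ioi (0:ℝ), ∫ r₂ in Set.Ioi (0:ℝ),
          r₁ ^ ((4:ℝ)/3) * r₂ ^ ((4:ℝ)/3) * Real.exp (-(r₁ + l*r₂)) / (r₁+r₂))
        = Real.Gamma (7/3)^2
          * ∫ r in Set.Ioi (0:ℝ), (1+r) ^ (-(7:ℝ)/3) * (l+r) ^ (-(7:ℝ)/3)) := by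
  refine ⟨fun r₁ r₂ h₁ h₂ => one_div_add_eq_integral_exp_mul_exp (add_pos h₁ h₂), fun l hl => ?_⟩
  have hdouble := lintegral_lintegral_rpow_mul_exp_div_add (a := 7/3) (b := 7/3)
    (by norm_num) (by norm_num) one_pos hl
  simp only [one_mul, show (7:ℝ)/3 - 1 = 4/3 by norm_num, ← neg_div, ← sq] at hdouble
  have hint := integrableOn_add_rpow_mul_add_rpow_Ioi (a := 7/3) (b := 7/3)
    (by norm_num) (by norm_num) one_pos hl
  simp only [← neg_div] at hint
  rw [integral_integral_eq_toReal_lintegral_lintegral (by fun_prop), hdouble,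
    integral_eq_lintegral_of_nonneg_ae, ENNReal.toReal_mul, ENNReal.toReal_ofReal (by positivity)]
  · filter_upwards [ae_restrict_mem measurableSet_Ioi] with r (hr : 0 < r)
    positivity
  · exact hint.aestronglyMeasurable
  · filter_upwards [ae_restrict_mem measurableSet_Ioi] with x (hx : 0 < x)
    filter_upwards [ae_restrict_mem measurableSet_Ioi] with y (hy : 0 < y)
    positivity
  · rw [hdouble]
    exact ENNReal.mul_ne_top ENNReal.ofReal_ne_top hint.lintegral_lt_top.ne
end

section
/- Let ω = e^{iπ/3}. For all r₁, r₂ > 0, the sum over signs σ₁, σ₂ ∈ {−1, +1} of σ₁σ₂ / (r₁^{1/3} e^{σ₁ iπ/3} + r₂^{1/3} e^{σ₂ iπ/3}) equals −3 r₁^{1/3} r₂^{1/3} / (r₁ + r₂). -/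
/-!
Write `a = r₁^{1/3}`, `b = r₂^{1/3}` and `ω, ω'` for the two boundary values `e^{±iπ/3}`, the
roots of `X² - X + 1`. Pairing the four terms by their denominators, `ω(a+b) · ω'(a+b) = (a+b)²`
and `(aω + bω')(aω' + bω) = a² - ab + b²`, so the sum is `1/(a+b) - (a+b)/(a² - ab + b²)`,
which is `-3ab/(a³ + b³) = -3ab/(r₁ + r₂)`.
-/

open Complex

section SixthRoots

variable {K : Type*} [Field K] {ω ω' a b : K}

theorem one_div_add_one_div_diagonal (hsum : ω + ω' = 1) (hprod : ω * ω' = 1)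
    (hab : a + b ≠ 0) :
    1 / (a * ω + b * ω) + 1 / (a * ω' + b * ω') = 1 / (a + b) := by
  have h₁ : (a + b) * ω ≠ 0 := mul_ne_zero hab (left_ne_zero_of_mul_eq_one hprod)
  have h₂ : (a + b) * ω' ≠ 0 := mul_ne_zero hab (right_ne_zero_of_mul_eq_one hprod)
  rw [← add_mul, ← add_mul, div_add_div _ _ h₁ h₂, div_eq_div_iff (mul_ne_zero h₁ h₂) hab]
  linear_combination (a + b) ^ 2 * hsum - (a + b) ^ 2 * hprod

theorem mul_add_mul_mul_mul_add_mul_swap (hsum : ω + ω' = 1) (hprod : ω * ω' = 1) :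
    (a * ω + b * ω') * (a * ω' + b * ω) = a ^ 2 - a * b + b ^ 2 := by
  linear_combination (a ^ 2 + b ^ 2 - 2 * a * b) * hprod + a * b * (ω + ω' + 1) * hsum

theorem one_div_add_one_div_antidiagonal (hsum : ω + ω' = 1) (hprod : ω * ω' = 1)
    (hab : a ^ 2 - a * b + b ^ 2 ≠ 0) :
    1 / (a * ω + b * ω') + 1 / (a * ω' + b * ω) = (a + b) / (a ^ 2 - a * b + b ^ 2) := by
  rw [← mul_add_mul_mul_mul_add_mul_swap hsum hprod] at hab ⊢
  rw [div_add_div _ _ (left_ne_zero_of_mul hab) (right_ne_zero_of_mul hab)]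
  congr 1
  linear_combination (a + b) * hsum

theorem sum_signs_one_div_mul_add_mul (hsum : ω + ω' = 1) (hprod : ω * ω' = 1)
    (hab : a ^ 3 + b ^ 3 ≠ 0) :
    1 / (a * ω + b * ω) - 1 / (a * ω + b * ω') - 1 / (a * ω' + b * ω) + 1 / (a * ω' + b * ω')
      = -3 * a * b / (a ^ 3 + b ^ 3) := by
  have hcube : a ^ 3 + b ^ 3 = (a + b) * (a ^ 2 - a * b + b ^ 2) := by ring
  obtain ⟨hlin, hquad⟩ := mul_ne_zero_iff.mp (hcube ▸ hab)
  calc _ = (1 / (a * ω + b * ω) + 1 / (a * ω' + b * ω'))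
        - (1 / (a * ω + b * ω') + 1 / (a * ω' + b * ω)) := by ring
    _ = 1 / (a + b) - (a + b) / (a ^ 2 - a * b + b ^ 2) := by
      rw [one_div_add_one_div_diagonal hsum hprod hlin,
        one_div_add_one_div_antidiagonal hsum hprod hquad]
    _ = -3 * a * b / (a ^ 3 + b ^ 3) := by
      rw [hcube, div_sub_div _ _ hlin hquad]
      ring

end SixthRoots

theorem Complex.exp_pi_div_three_mul_I_add_exp_neg :
    exp (Real.pi / 3 * I) + exp (-(Real.pi / 3) * I) = 1 := by
  have hcos : cos (Real.pi / 3) = 1 / 2 := by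
    have h := congrArg ofReal Real.cos_pi_div_three
    push_cast at h
    exact h
  rw [← two_cos, hcos]
  norm_num

theorem Complex.exp_pi_div_three_mul_I_mul_exp_neg :
    exp (Real.pi / 3 * I) * exp (-(Real.pi / 3) * I) = 1 := by
  rw [← exp_add, ← add_mul, add_neg_cancel, zero_mul, exp_zero]

theorem Real.rpow_one_div_three_pow_three {x : ℝ} (hx : 0 ≤ x) : (x ^ ((1 : ℝ) / 3)) ^ 3 = x := by
  simpa using rpow_inv_natCast_pow (n := 3) hx three_ne_zero

theorem stmt10 (r₁ r₂ : ℝ) (h1 : 0 < r₁) (h2 : 0 < r₂) :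
    1 / (((r₁ ^ ((1:ℝ)/3) : ℝ) : ℂ) * Complex.exp (Real.pi/3 * Complex.I)
          + ((r₂ ^ ((1:ℝ)/3) : ℝ) : ℂ) * Complex.exp (Real.pi/3 * Complex.I))
      - 1 / (((r₁ ^ ((1:ℝ)/3) : ℝ) : ℂ) * Complex.exp (Real.pi/3 * Complex.I)
          + ((r₂ ^ ((1:ℝ)/3) : ℝ) : ℂ) * Complex.exp (-(Real.pi/3) * Complex.I))
      - 1 / (((r₁ ^ ((1:ℝ)/3) : ℝ) : ℂ) * Complex.exp (-(Real.pi/3) * Complex.I)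
          + ((r₂ ^ ((1:ℝ)/3) : ℝ) : ℂ) * Complex.exp (Real.pi/3 * Complex.I))
      + 1 / (((r₁ ^ ((1:ℝ)/3) : ℝ) : ℂ) * Complex.exp (-(Real.pi/3) * Complex.I)
          + ((r₂ ^ ((1:ℝ)/3) : ℝ) : ℂ) * Complex.exp (-(Real.pi/3) * Complex.I))
      = -3 * ((r₁ ^ ((1:ℝ)/3) : ℝ) : ℂ) * ((r₂ ^ ((1:ℝ)/3) : ℝ) : ℂ) / ((r₁ : ℂ) + (r₂ : ℂ)) := by
  have hr₁ : (r₁ : ℂ) = ((r₁ ^ ((1 : ℝ) / 3) : ℝ) : ℂ) ^ 3 := by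
    exact_mod_cast (Real.rpow_one_div_three_pow_three h1.le).symm
  have hr₂ : (r₂ : ℂ) = ((r₂ ^ ((1 : ℝ) / 3) : ℝ) : ℂ) ^ 3 := by
    exact_mod_cast (Real.rpow_one_div_three_pow_three h2.le).symm
  have hden : (r₁ : ℂ) + r₂ ≠ 0 := by exact_mod_cast (add_pos h1 h2).ne'
  rw [hr₁, hr₂] at hden ⊢
  exact sum_signs_one_div_mul_add_mul exp_pi_div_three_mul_I_add_exp_neg
    exp_pi_div_three_mul_I_mul_exp_neg hden
end
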